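/- arXiv:2210.13812 — 2 statements merged into one kernel-verified Lean document; each statement's English description precedes it below -/
import Mathlib

section
/- For integers a > b > c ≥ 0, the minimal addition chain length of 2^a + 2^b + 2^c equals a + 2, i.e., ℓ(2^a + 2^b + 2^c) = a + 2. -/
/-! A chain satisfies `x (i + d) ≤ 2 ^ d * x i`, in particular `x k ≤ 2 ^ k`, so a chain for
`2 ^ a + 2 ^ b + 2 ^ c > 2 ^ a` has length at least `a + 1`. If an element beats that bound,
`x (k + 1) > 2 ^ k`, then its larger summand must be `x k`, which again beats the bound; an induction
along the chain, with a short case analysis on the smaller summand, shows that such an element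
has the form `2 ^ k + 2 ^ v`. A number with three binary digits is not of this form, so the length
is at least `a + 2`; the binary method (double, add one, double, add one, double) attains it. -/

/-- An addition chain of length `r` for `n`, given by `a : ℕ → ℕ`. -/
def IsAdditionChain (r : ℕ) (a : ℕ → ℕ) (n : ℕ) : Prop :=
  a 0 = 1 ∧ a r = n ∧ (∀ k, k < r → a k < a (k + 1)) ∧
    ∀ k, 1 ≤ k → k ≤ r → ∃ i j, i < k ∧ j < k ∧ a k = a i + a j

/-- Minimal length of an addition chain for `n`. -/
noncomputable def addLen (n : ℕ) : ℕ :=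
  sInf {r | ∃ a : ℕ → ℕ, IsAdditionChain r a n}

theorem two_pow_add_two_pow_ne_two_pow {b c : ℕ} (hcb : c < b) (v : ℕ) :
    2 ^ b + 2 ^ c ≠ 2 ^ v := by
  intro h
  have hc : 0 < 2 ^ c := Nat.two_pow_pos c
  have hbv : b < v := (Nat.pow_lt_pow_iff_right one_lt_two).mp (by omega)
  have hvb : v < b + 1 := by
    refine (Nat.pow_lt_pow_iff_right one_lt_two).mp ?_
    have := (Nat.pow_lt_pow_iff_right one_lt_two).mpr hcb
    rw [pow_succ]
    omega
  omega

theorem eq_of_two_pow_lt_two_pow_add_two_pow {n v w : ℕ} (hv : v ≤ n) (hw : w < n)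
    (h : 2 ^ n < 2 ^ v + 2 ^ w) : v = n := by
  by_contra hvn
  have : 2 ^ v ≤ 2 ^ (n - 1) := Nat.pow_le_pow_right two_pos (by omega)
  have : 2 ^ w ≤ 2 ^ (n - 1) := Nat.pow_le_pow_right two_pos (by omega)
  have : 2 ^ n = 2 * 2 ^ (n - 1) := by rw [← pow_succ']; congr 1; omega
  omega

namespace IsAdditionChain

variable {r n : ℕ} {x : ℕ → ℕ}

theorem strictMonoOn (h : IsAdditionChain r x n) : StrictMonoOn x (Set.Iic r) :=
  strictMonoOn_Iic_of_lt_succ fun m hm => by simpa using h.2.2.1 m hm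

theorem pos (h : IsAdditionChain r x n) : 0 < n := by
  have := h.strictMonoOn.monotoneOn (a := 0) (b := r) (by simp) (by simp) (Nat.zero_le r)
  rw [h.1, h.2.1] at this
  omega

theorem exists_succ (h : IsAdditionChain r x n) {i j : ℕ} (hi : i ≤ r) (hj : j ≤ r)
    (hn : n < x i + x j) : ∃ y, IsAdditionChain (r + 1) y (x i + x j) := by
  obtain ⟨h0, hr, hmono, hsum⟩ := h
  have hne {k : ℕ} (hk : k ≤ r) : k ≠ r + 1 := by omega
  refine ⟨Function.update x (r + 1) (x i + x j), by simpa using h0, by simp,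
    fun k hk => ?_, fun k hk hkr => ?_⟩
  · rcases Nat.lt_succ_iff_lt_or_eq.mp hk with hk | rfl
    · simpa [Function.update_of_ne (hne hk.le), Function.update_of_ne (hne hk)] using hmono k hk
    · simpa [hr] using hn
  · rcases hkr.lt_or_eq with hkr | rfl
    · obtain ⟨i', j', hi', hj', hx⟩ := hsum k hk (by omega)
      refine ⟨i', j', hi', hj', ?_⟩
      simp only [Function.update_of_ne (hne (by omega : k ≤ r)),
        Function.update_of_ne (hne (by omega : i' ≤ r)),
        Function.update_of_ne (hne (by omega : j' ≤ r)), hx]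
    · exact ⟨i, j, by omega, by omega, by
        simp [Function.update_of_ne (hne hi), Function.update_of_ne (hne hj)]⟩

theorem exists_eq_add_le (h : IsAdditionChain r x n) {k : ℕ} (hk : 1 ≤ k) (hkr : k ≤ r) :
    ∃ i j, i ≤ j ∧ j < k ∧ x k = x i + x j := by
  obtain ⟨i, j, hi, hj, hx⟩ := h.2.2.2 k hk hkr
  rcases le_total i j with hij | hji
  · exact ⟨i, j, hij, hj, hx⟩
  · exact ⟨j, i, hji, hi, by rw [hx, add_comm]⟩

theorem le_two_mul (h : IsAdditionChain r x n) {k : ℕ} (hkr : k + 1 ≤ r) :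
    x (k + 1) ≤ 2 * x k := by
  obtain ⟨i, j, hij, hj, hx⟩ := h.exists_eq_add_le (Nat.le_add_left 1 k) hkr
  have hmono := h.strictMonoOn.monotoneOn
  have hi : x i ≤ x k := hmono (by simp; omega) (by simp; omega) (by omega)
  have hj : x j ≤ x k := hmono (by simp; omega) (by simp; omega) (by omega)
  omega

theorem le_two_pow_mul (h : IsAdditionChain r x n) {i : ℕ} :
    ∀ d, i + d ≤ r → x (i + d) ≤ 2 ^ d * x i
  | 0, _ => by simp
  | d + 1, hd => calc
      x (i + d + 1) ≤ 2 * x (i + d) := h.le_two_mul hd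
      _ ≤ 2 * (2 ^ d * x i) := by gcongr; exact h.le_two_pow_mul d (by omega)
      _ = 2 ^ (d + 1) * x i := by ring

theorem le_two_pow (h : IsAdditionChain r x n) {k : ℕ} (hkr : k ≤ r) : x k ≤ 2 ^ k := by
  simpa [h.1] using h.le_two_pow_mul (i := 0) k (by simpa using hkr)

theorem eq_two_pow_of_le (h : IsAdditionChain r x n) {i k : ℕ} (hik : i ≤ k) (hkr : k ≤ r)
    (hk : x k = 2 ^ k) : x i = 2 ^ i := by
  obtain ⟨d, rfl⟩ := Nat.exists_eq_add_of_le hik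
  refine le_antisymm (h.le_two_pow (by omega)) (Nat.le_of_mul_le_mul_left ?_ (Nat.two_pow_pos d))
  rw [← pow_add, add_comm, ← hk]
  exact h.le_two_pow_mul d hkr

theorem exists_eq_add_pred_of_two_pow_lt (h : IsAdditionChain r x n) {k : ℕ} (hkr : k + 1 ≤ r)
    (hk : 2 ^ k < x (k + 1)) : ∃ i ≤ k, x (k + 1) = x k + x i := by
  obtain ⟨i, j, hij, hj, hx⟩ := h.exists_eq_add_le (Nat.le_add_left 1 k) hkr
  obtain rfl : j = k := by
    by_contra hjk
    have hi : x i ≤ 2 ^ i := h.le_two_pow (by omega)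
    have hj : x j ≤ 2 ^ j := h.le_two_pow (by omega)
    have : 2 ^ i ≤ 2 ^ (k - 1) := Nat.pow_le_pow_right two_pos (by omega)
    have : 2 ^ j ≤ 2 ^ (k - 1) := Nat.pow_le_pow_right two_pos (by omega)
    have : 2 ^ k = 2 * 2 ^ (k - 1) := by rw [← pow_succ']; congr 1; omega
    omega
  exact ⟨i, hij, by rw [hx, add_comm]⟩

theorem exists_eq_two_pow_add_two_pow (h : IsAdditionChain r x n) :
    ∀ k, k + 1 ≤ r → 2 ^ k < x (k + 1) → ∃ v ≤ k, x (k + 1) = 2 ^ k + 2 ^ v := by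
  intro k
  induction k using Nat.strong_induction_on with
  | _ k ih =>
  intro hkr hk
  obtain ⟨i, hik, hxi⟩ := h.exists_eq_add_pred_of_two_pow_lt hkr hk
  rcases k with _ | m
  · obtain rfl : i = 0 := by omega
    exact ⟨0, le_rfl, by simp [hxi, h.1]⟩
  have hm : 2 ^ m < x (m + 1) := by
    have := h.le_two_mul hkr
    rw [pow_succ] at hk
    omega
  obtain ⟨v, hvm, hv⟩ := ih m (by omega) (by omega) hm
  rcases hvm.eq_or_lt with rfl | hvm
  · have hpow : x (v + 1) = 2 ^ (v + 1) := by rw [hv, pow_succ]; ring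
    exact ⟨i, hik, by rw [hxi, hpow, h.eq_two_pow_of_le hik (by omega) hpow]⟩
  obtain ⟨n, rfl⟩ : ∃ n, m = n + 1 := ⟨m - 1, by omega⟩
  have hxi : x (n + 3) = 2 ^ (n + 1) + 2 ^ v + x i := by rw [hxi, hv]
  have hpow_n : 2 ^ (n + 2) = 4 * 2 ^ n := by rw [pow_add]; ring
  have hpow_v : 2 ^ v ≤ 2 ^ n := Nat.pow_le_pow_right two_pos (by omega)
  -- `x i > 2 ^ (n + 1) - 2 ^ v ≥ 2 ^ n`, so `i > n`
  obtain rfl | rfl : i = n + 2 ∨ i = n + 1 := by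
    have : x i ≤ 2 ^ i := h.le_two_pow (by omega)
    have : n < i := (Nat.pow_lt_pow_iff_right one_lt_two).mp (by omega)
    omega
  · exact ⟨v + 1, by omega, by rw [hxi, hv, pow_succ, pow_succ 2 (n + 1)]; ring⟩
  obtain ⟨w, hwn, hw⟩ := ih n (by omega) (by omega) (by omega)
  have hvw : v ≤ w + 1 := by
    have := h.le_two_mul (k := n + 1) (by omega)
    rw [hv, hw] at this
    exact (Nat.pow_le_pow_iff_right one_lt_two).mp (by rw [pow_succ]; omega)
  rcases hwn.eq_or_lt with rfl | hwn
  · exact ⟨v, by omega, by rw [hxi, hw, hpow_n]; ring⟩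
  obtain rfl : v = n := eq_of_two_pow_lt_two_pow_add_two_pow (by omega) hwn (by omega)
  obtain rfl : v = w + 1 := by omega
  exact ⟨w, by omega, by rw [hxi, hw]; ring⟩

theorem add_two_le_of_eq_two_pow_add_two_pow_add_two_pow {a b c : ℕ}
    (h : IsAdditionChain r x (2 ^ a + 2 ^ b + 2 ^ c)) (hcb : c < b) : a + 2 ≤ r := by
  have hxr : x r = 2 ^ a + 2 ^ b + 2 ^ c := h.2.1
  have hlt : 2 ^ a < x r := by have := Nat.two_pow_pos b; have := Nat.two_pow_pos c; omega
  have har : a < r :=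
    (Nat.pow_lt_pow_iff_right one_lt_two).mp (lt_of_lt_of_le hlt (h.le_two_pow le_rfl))
  by_contra hr
  obtain rfl : r = a + 1 := by omega
  obtain ⟨v, -, hv⟩ := h.exists_eq_two_pow_add_two_pow a le_rfl hlt
  exact two_pow_add_two_pow_ne_two_pow hcb v (by omega)

end IsAdditionChain

theorem exists_isAdditionChain_two_pow_mul {r n : ℕ} (h : ∃ x, IsAdditionChain r x n) :
    ∀ d, ∃ x, IsAdditionChain (r + d) x (2 ^ d * n)
  | 0 => by simpa using h
  | d + 1 => by
    obtain ⟨x, hx⟩ := exists_isAdditionChain_two_pow_mul h d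
    have hpos : 0 < 2 ^ d * n := hx.2.1 ▸ hx.pos
    have hxr : x (r + d) = 2 ^ d * n := hx.2.1
    have := hx.exists_succ le_rfl le_rfl (by omega)
    rwa [hxr, ← two_mul, ← mul_assoc, ← pow_succ'] at this

theorem exists_isAdditionChain_succ {r n : ℕ} (h : ∃ x, IsAdditionChain r x n) :
    ∃ x, IsAdditionChain (r + 1) x (n + 1) := by
  obtain ⟨x, hx⟩ := h
  have := hx.exists_succ le_rfl (Nat.zero_le r) (by rw [hx.1, hx.2.1]; omega)
  rwa [hx.1, hx.2.1] at this

theorem exists_isAdditionChain_two_pow_add_two_pow_add_two_pow {a b c : ℕ} (hcb : c < b)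
    (hba : b < a) : ∃ x, IsAdditionChain (a + 2) x (2 ^ a + 2 ^ b + 2 ^ c) := by
  obtain ⟨q, rfl⟩ := Nat.exists_eq_add_of_lt hcb
  obtain ⟨p, rfl⟩ := Nat.exists_eq_add_of_lt hba
  have hone : ∃ x, IsAdditionChain 0 x 1 :=
    ⟨fun _ => 1, rfl, rfl, fun _ h => absurd h (Nat.not_lt_zero _), fun _ _ _ => by omega⟩
  have := exists_isAdditionChain_two_pow_mul (exists_isAdditionChain_succ
    (exists_isAdditionChain_two_pow_mul (exists_isAdditionChain_succ
      (exists_isAdditionChain_two_pow_mul hone (p + 1))) (q + 1))) c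
  convert this using 3 <;> ring

theorem stmt2 : ∀ a b c : ℕ, c < b → b < a → addLen (2 ^ a + 2 ^ b + 2 ^ c) = a + 2 := by
  intro a b c hcb hba
  refine IsLeast.csInf_eq
    ⟨exists_isAdditionChain_two_pow_add_two_pow_add_two_pow hcb hba, ?_⟩
  rintro r ⟨x, hx⟩
  exact hx.add_two_le_of_eq_two_pow_add_two_pow_add_two_pow hcb
end

section
/- Let m ≥ 1 and k ≥ 3 be integers, c_3 = 2^{m+4} + 2^{m+2} + 3, c_4 = 2^{m+3} + 2^{m+2} + 2, and N = c_3·2^{m+k+4} + c_4 (so N = 2n where n is the integer with binary form 101 0^m 11 0^k 11 0^m 1). Then ℓ(2^N − 1) ≤ N + 2m + k + 10. -/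
/-!
Brauer's construction. Since `2 ^ (a + b) - 1 = (2 ^ a - 1) * 2 ^ b + (2 ^ b - 1)`, a chain
ending at `2 ^ a - 1` and containing `2 ^ b - 1` is extended to `2 ^ (a + b) - 1` by `b` doublings
and one addition. Running this along a star chain `1 = e₀, …, e_r = N` for the exponent (every
`e_{i+1}` is `e_i` plus an earlier term) gives `ℓ(2 ^ N - 1) ≤ N - 1 + r`. Here, with `s = m + k + 4`,
`1, 2, …, 2 ^ s, 2 ^ s + 1, 2 ^ (s + 1) + 1, 3 · 2 ^ s + 2, 5 · 2 ^ s + 3, …,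
(5 · 2 ^ s + 3) · 2 ^ (m + 2), N` is such a chain, of length `2m + k + 11`.
-/

lemma two_pow_sub_one_mul_two_pow_add (p q : ℕ) :
    (2 ^ p - 1) * 2 ^ q + (2 ^ q - 1) = 2 ^ (p + q) - 1 := by
  have hp : 1 ≤ 2 ^ p := Nat.one_le_two_pow
  have hq : 1 ≤ 2 ^ q := Nat.one_le_two_pow
  have hpq : 1 ≤ 2 ^ (p + q) := Nat.one_le_two_pow
  zify [hp, hq, hpq]
  ring

namespace IsAdditionChain

variable {r : ℕ} {a : ℕ → ℕ} {n : ℕ}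

lemma addLen_le (h : IsAdditionChain r a n) : addLen n ≤ r :=
  Nat.sInf_le ⟨a, h⟩

lemma one_le (h : IsAdditionChain r a n) {t : ℕ} (ht : t ≤ r) : 1 ≤ a t := by
  induction t with
  | zero => exact h.1.ge
  | succ t ih => exact (ih (by omega)).trans (h.2.2.1 t ht).le

lemma update_succ (h : IsAdditionChain r a n) {i j x : ℕ} (hi : i ≤ r) (hj : j ≤ r)
    (hx : x = a i + a j) (hn : n < x) :
    IsAdditionChain (r + 1) (Function.update a (r + 1) x) x := by
  obtain ⟨h0, hr, hmono, hsum⟩ := h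
  have agree : ∀ t ≤ r, Function.update a (r + 1) x t = a t :=
    fun t ht => Function.update_of_ne (by omega) _ _
  refine ⟨by rw [agree 0 (Nat.zero_le _), h0], by simp, fun t ht => ?_, fun t ht1 ht2 => ?_⟩
  · rw [agree t (by omega)]
    rcases Nat.lt_succ_iff_lt_or_eq.1 ht with ht | rfl
    · rw [agree (t + 1) ht]
      exact hmono t ht
    · simpa [hr] using hn
  · rcases Nat.lt_succ_iff_lt_or_eq.1 (Nat.lt_succ_of_le ht2) with ht2 | rfl
    · obtain ⟨i', j', hi', hj', e⟩ := hsum t ht1 (by omega)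
      refine ⟨i', j', hi', hj', ?_⟩
      rw [agree t (by omega), agree i' (by omega), agree j' (by omega), e]
    · exact ⟨i, j, by omega, by omega, by rw [agree i hi, agree j hj]; simpa using hx⟩

lemma exists_mul_two_pow (h : IsAdditionChain r a n) (q : ℕ) :
    ∃ a', IsAdditionChain (r + q) a' (n * 2 ^ q) ∧ ∀ t ≤ r, a' t = a t := by
  induction q with
  | zero => exact ⟨a, by simpa using h, fun _ _ => rfl⟩
  | succ q ih =>
    obtain ⟨a', h', agree⟩ := ih
    have hpos : 1 ≤ n * 2 ^ q := h'.2.1 ▸ h'.one_le le_rfl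
    refine ⟨_, h'.update_succ le_rfl le_rfl (x := n * 2 ^ (q + 1)) (by rw [h'.2.1]; ring)
      (by rw [pow_succ, ← mul_assoc]; omega),
      fun t ht => by rw [Function.update_of_ne (by omega), agree t ht]⟩

lemma exists_two_pow_add_sub_one {p q i : ℕ} (h : IsAdditionChain r a (2 ^ p - 1))
    (hq : 1 ≤ q) (hi : i ≤ r) (hai : a i = 2 ^ q - 1) :
    ∃ a', IsAdditionChain (r + q + 1) a' (2 ^ (p + q) - 1) ∧ ∀ t ≤ r, a' t = a t := by
  obtain ⟨a', h', agree⟩ := h.exists_mul_two_pow q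
  have hx : 2 ^ (p + q) - 1 = a' (r + q) + a' i := by
    rw [h'.2.1, agree i hi, hai, two_pow_sub_one_mul_two_pow_add]
  have h2q : 2 ≤ 2 ^ q := Nat.le_self_pow (by omega) 2
  refine ⟨_, h'.update_succ le_rfl (by omega) hx
    (by rw [← two_pow_sub_one_mul_two_pow_add]; omega),
    fun t ht => by rw [Function.update_of_ne (by omega), agree t ht]⟩

end IsAdditionChain

/-- `IsStarChain n l`: `l` lists the earlier terms, newest first, of a star chain ending at `n`. -/
inductive IsStarChain : ℕ → List ℕ → Prop
  | one : IsStarChain 1 []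
  | cons {a y : ℕ} {l : List ℕ} : IsStarChain a l → y ∈ a :: l → IsStarChain (a + y) (a :: l)

namespace IsStarChain

variable {n : ℕ} {l : List ℕ}

lemma pos (h : IsStarChain n l) : ∀ x ∈ n :: l, 0 < x := by
  induction h with
  | one => simp
  | cons h hy ih =>
    intro x hx
    rcases List.mem_cons.1 hx with rfl | hx
    · have := ih _ hy
      omega
    · exact ih x hx

lemma one_mem (h : IsStarChain n l) : 1 ∈ n :: l := by
  induction h with
  | one => simp
  | cons _ _ ih => exact List.mem_cons_of_mem _ ih

lemma exists_mul_two_pow (h : IsStarChain n l) (j : ℕ) :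
    ∃ l', IsStarChain (n * 2 ^ j) l' ∧ n :: l ⊆ n * 2 ^ j :: l' ∧ l'.length = l.length + j := by
  induction j with
  | zero => exact ⟨l, by simpa using h, by simp, rfl⟩
  | succ j ih =>
    obtain ⟨l', h', hsub, hlen⟩ := ih
    refine ⟨n * 2 ^ j :: l', ?_, List.Subset.trans hsub (List.subset_cons_self _ _),
      by simp [hlen]; omega⟩
    convert h'.cons List.mem_cons_self using 1
    ring

theorem exists_isAdditionChain_two_pow_sub_one (h : IsStarChain n l) :
    ∃ r a, r + 1 = n + l.length ∧ IsAdditionChain r a (2 ^ n - 1) ∧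
      ∀ e ∈ n :: l, ∃ i ≤ r, a i = 2 ^ e - 1 := by
  induction h with
  | one =>
    refine ⟨0, fun _ => 1, rfl, ⟨rfl, rfl, fun _ h => absurd h (Nat.not_lt_zero _),
      fun _ h1 h2 => absurd h1 (by omega)⟩,
      fun e he => ⟨0, le_rfl, by rw [List.mem_singleton.1 he]; rfl⟩⟩
  | @cons a y l h hy ih =>
    obtain ⟨r, c, hr, hc, hmem⟩ := ih
    obtain ⟨i, hi, hci⟩ := hmem y hy
    obtain ⟨c', hc', agree⟩ := hc.exists_two_pow_add_sub_one (h.pos y hy) hi hci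
    refine ⟨r + y + 1, c', by simp; omega, hc', fun e he => ?_⟩
    rcases List.mem_cons.1 he with rfl | he
    · exact ⟨r + y + 1, le_rfl, hc'.2.1⟩
    · obtain ⟨i', hi', hci'⟩ := hmem e he
      exact ⟨i', by omega, by rw [agree i' hi', hci']⟩

theorem addLen_two_pow_sub_one_add_one_le (h : IsStarChain n l) :
    addLen (2 ^ n - 1) + 1 ≤ n + l.length := by
  obtain ⟨r, a, hr, ha, -⟩ := h.exists_isAdditionChain_two_pow_sub_one
  have hlen := ha.addLen_le
  omega

end IsStarChain

lemma exists_isStarChain_five_mul_two_pow_add (s j : ℕ) :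
    ∃ l, IsStarChain ((5 * 2 ^ s + 3) * 2 ^ j + (3 * 2 ^ s + 2)) l ∧ l.length = s + j + 5 := by
  obtain ⟨l₀, h₀, -, hlen₀⟩ := IsStarChain.one.exists_mul_two_pow s
  rw [one_mul] at h₀
  have h₁ := h₀.cons h₀.one_mem
  have h₂ := h₁.cons (y := 2 ^ s) (by simp)
  have h₃ := h₂.cons (y := 2 ^ s + 1) (by simp)
  have h₄ := h₃.cons (y := 2 ^ s + 1 + 2 ^ s) (by simp)
  obtain ⟨l₅, h₅, hsub, hlen₅⟩ := h₄.exists_mul_two_pow j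
  have h₆ := h₅.cons (hsub (by simp : 2 ^ s + 1 + 2 ^ s + (2 ^ s + 1) ∈ _))
  refine ⟨_, by convert h₆ using 1; ring, by simp [hlen₅, hlen₀]; omega⟩

theorem stmt18_general (m k : ℕ) :
    addLen (2 ^ ((2 ^ (m + 4) + 2 ^ (m + 2) + 3) * 2 ^ (m + k + 4) +
        (2 ^ (m + 3) + 2 ^ (m + 2) + 2)) - 1) ≤
      ((2 ^ (m + 4) + 2 ^ (m + 2) + 3) * 2 ^ (m + k + 4) +
        (2 ^ (m + 3) + 2 ^ (m + 2) + 2)) + 2 * m + k + 10 := by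
  obtain ⟨l, hl, hlen⟩ := exists_isStarChain_five_mul_two_pow_add (m + k + 4) (m + 2)
  have hN : (2 ^ (m + 4) + 2 ^ (m + 2) + 3) * 2 ^ (m + k + 4) + (2 ^ (m + 3) + 2 ^ (m + 2) + 2) =
      (5 * 2 ^ (m + k + 4) + 3) * 2 ^ (m + 2) + (3 * 2 ^ (m + k + 4) + 2) := by
    ring
  have hbound := hl.addLen_two_pow_sub_one_add_one_le
  rw [hN]
  omega

theorem stmt18 (m k : ℕ) (hm : 1 ≤ m) (hk : 3 ≤ k) :
    addLen (2 ^ ((2 ^ (m + 4) + 2 ^ (m + 2) + 3) * 2 ^ (m + k + 4) +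
        (2 ^ (m + 3) + 2 ^ (m + 2) + 2)) - 1) ≤
      ((2 ^ (m + 4) + 2 ^ (m + 2) + 3) * 2 ^ (m + k + 4) +
        (2 ^ (m + 3) + 2 ^ (m + 2) + 2)) + 2 * m + k + 10 :=
  stmt18_general m k
end
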